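/- Let A = (Q, E, s, F) be a Wheeler GNFA, let ≤ be a Wheeler order on A, and let α ∈ Σ*. If u, v ∈ Q are such that u < v and v ∈ G^≺_⊣(α), then u ∈ G^≺_⊣(α). In other words, G^≺_⊣(α) = Q[1, |G^≺_⊣(α)|]. -/

import Mathlib

/-- Strict co-lexicographic order: `α ≺ β` iff `α.reverse` is lexicographically
smaller than `β.reverse`. The empty string is the minimum. -/
def ColexLt {σ : Type*} [LinearOrder σ] (α β : List σ) : Prop :=
  List.Lex (· < ·) α.reverse β.reverse

/-- Non-strict co-lexicographic order `α ≼ β`. -/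
def ColexLe {σ : Type*} [LinearOrder σ] (α β : List σ) : Prop :=
  ColexLt α β ∨ α = β

/-- `α` is a strict suffix of `β`. -/
def IsStrictSuffix {σ : Type*} (α β : List σ) : Prop :=
  α <:+ β ∧ α ≠ β

/-- `p(α, k)`: the prefix of `α` of length `k`. -/
def pref {σ : Type*} (α : List σ) (k : ℕ) : List σ := α.take k

/-- `s(α, k)`: the suffix of `α` of length `k`. -/
def suff {σ : Type*} (α : List σ) (k : ℕ) : List σ := α.drop (α.length - k)

/-- The 1-based rank of a state in a finite linear order: `rankQ u = i` means
`u = Q[i]` in the enumeration `Q[1] < Q[2] < ⋯ < Q[|Q|]`. -/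
noncomputable def rankQ {Q : Type*} [Fintype Q] [LinearOrder Q] (u : Q) : ℕ :=
  {v : Q | v ≤ u}.ncard

/-- `Q[i, j] = {Q[i], …, Q[j]}` (empty if `i > j`). -/
def Qiv (Q : Type*) [Fintype Q] [LinearOrder Q] (i j : ℕ) : Set Q :=
  {u | i ≤ rankQ u ∧ rankQ u ≤ j}

/-- A generalized nondeterministic finite automaton: a finite set of
string-labeled edges `E ⊆ Q × Q × Σ*`, an initial state `s`, final states `F`. -/
structure GNFA (σ Q : Type*) where
  E : Finset (Q × Q × List σ)
  s : Q
  F : Finset Q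

namespace GNFA

variable {σ Q : Type*}

/-- `I A u β` means `β ∈ I_u`: `β` is obtained by concatenating the edge labels
along some path from `s` to `u` (in particular `ε ∈ I_s`). -/
inductive I (A : GNFA σ Q) : Q → List σ → Prop
  | base : I A A.s []
  | step {u v : Q} {α ρ : List σ} : I A u α → (u, v, ρ) ∈ A.E → I A v (α ++ ρ)

/-- Reachability along edges. -/
def Reach (A : GNFA σ Q) : Q → Q → Prop :=
  Relation.ReflTransGen (fun x y => ∃ ρ, (x, y, ρ) ∈ A.E)

/-- Every state is reachable from the initial state and is co-reachable
(final or allows reaching a final state). -/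
def Standard (A : GNFA σ Q) : Prop :=
  (∀ u, A.Reach A.s u) ∧ ∀ u, ∃ f ∈ A.F, A.Reach u f

/-- An ε-walk from `u` to `v`: a (possibly empty) sequence of ε-labeled edges. -/
def EpsWalk (A : GNFA σ Q) : Q → Q → Prop :=
  Relation.ReflTransGen (fun x y => (x, y, ([] : List σ)) ∈ A.E)

/-- An `r`-GNFA: all edge labels have length at most `r`. -/
def Bounded (A : GNFA σ Q) (r : ℕ) : Prop := ∀ e ∈ A.E, e.2.2.length ≤ r

/-- A GNFA without ε-transitions: every edge label is nonempty. -/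
def NoEps (A : GNFA σ Q) : Prop := ∀ e ∈ A.E, e.2.2 ≠ []

/-- `λ(u)`: the set of strings labeling some edge entering `u`. -/
def lab (A : GNFA σ Q) (u : Q) : Set (List σ) := {ρ | ∃ u', (u', u, ρ) ∈ A.E}

/-- `G_⊣(α)`: states `u` such that some `β ∈ I_u` has `α` as a suffix. -/
def Gsuf (A : GNFA σ Q) (α : List σ) : Set Q := {u | ∃ β, I A u β ∧ α <:+ β}

/-- `G*(α)`: states reached by an edge whose label has `α` as a suffix. -/
def Gstar (A : GNFA σ Q) (α : List σ) : Set Q := {u | ∃ ρ ∈ A.lab u, α <:+ ρ}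

section Colex
variable [LinearOrder σ]

/-- The preorder `u ≼_A v`. -/
def Preceq (A : GNFA σ Q) (u v : Q) : Prop :=
  ∀ α β, I A u α → I A v β →
    ¬((I A u α ∧ I A v α) ∧ (I A u β ∧ I A v β)) → ColexLt α β

/-- `G^≺(α)`: states `u` such that every `β ∈ I_u` satisfies `β ≺ α`. -/
def Gprec (A : GNFA σ Q) (α : List σ) : Set Q := {u | ∀ β, I A u β → ColexLt β α}

/-- `G^≺_⊣(α) = G^≺(α) ∪ G_⊣(α)`. -/
def GprecSuf (A : GNFA σ Q) (α : List σ) : Set Q := A.Gprec α ∪ A.Gsuf α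

/-- The linear order on `Q` is a Wheeler order on `A` (Axioms 1–4). -/
def IsWheeler [LinearOrder Q] (A : GNFA σ Q) : Prop :=
  (∀ u v : Q, u ≤ v → A.Preceq u v) ∧
  (∀ u : Q, A.s ≤ u) ∧
  (∀ u' u v' v : Q, ∀ ρ ρ' : List σ, (u', u, ρ) ∈ A.E → (v', v, ρ') ∈ A.E →
      u < v → ¬IsStrictSuffix ρ' ρ → ColexLe ρ ρ') ∧
  (∀ u' u v' v : Q, ∀ ρ : List σ, (u', u, ρ) ∈ A.E → (v', v, ρ) ∈ A.E →
      u < v → u' ≤ v')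

end Colex

section Indexed
variable [Fintype Q] [LinearOrder Q]

/-- `out(Q[1, m], ρ)`: number of edges labeled `ρ` leaving states in `Q[1, m]`. -/
noncomputable def outC (A : GNFA σ Q) (m : ℕ) (ρ : List σ) : ℕ :=
  {e : Q × Q × List σ | e ∈ A.E ∧ rankQ e.1 ≤ m ∧ e.2.2 = ρ}.ncard

/-- `in(Q[1, m], ρ)`: number of edges labeled `ρ` entering states in `Q[1, m]`. -/
noncomputable def inC (A : GNFA σ Q) (m : ℕ) (ρ : List σ) : ℕ :=
  {e : Q × Q × List σ | e ∈ A.E ∧ rankQ e.2.1 ≤ m ∧ e.2.2 = ρ}.ncard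

/-- `A_max[i]`: the largest `j` such that there is an ε-walk from `Q[j]` to `Q[i]`. -/
noncomputable def Amax (A : GNFA σ Q) (i : ℕ) : ℕ :=
  sSup {j | ∃ u v : Q, rankQ u = i ∧ rankQ v = j ∧ A.EpsWalk v u}

/-- `A_min[i]`: the smallest `j` such that there is an ε-walk from `Q[j]` to `Q[i]`. -/
noncomputable def Amin (A : GNFA σ Q) (i : ℕ) : ℕ :=
  sInf {j | ∃ u v : Q, rankQ u = i ∧ rankQ v = j ∧ A.EpsWalk v u}

variable [LinearOrder σ]

/-- `f_k = out(Q[1, |G^≺(p(α, |α|−k))|], s(α, k))`. -/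
noncomputable def fk (A : GNFA σ Q) (α : List σ) (k : ℕ) : ℕ :=
  A.outC ((A.Gprec (pref α (α.length - k))).ncard) (suff α k)

/-- `g_k = out(Q[1, |G^≺_⊣(p(α, |α|−k))|], s(α, k))`. -/
noncomputable def gk (A : GNFA σ Q) (α : List σ) (k : ℕ) : ℕ :=
  A.outC ((A.GprecSuf (pref α (α.length - k))).ncard) (suff α k)

/-- The property defining `j*` in Lemmas 2 and 4 (largest `j` satisfying it):
(i) `in(Q[1, j], s(α, k)) ≤ f_k` for every `0 < k < min{r+1, |α|}`; and
(ii) `ρ ≺ α` for every `ρ ∈ Σ^k ∩ λ(Q[h])`, every `1 ≤ h ≤ j`, every `0 < k < r+1`. -/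
def Jcond (A : GNFA σ Q) (r : ℕ) (α : List σ) (j : ℕ) : Prop :=
  (∀ k, 0 < k → k < min (r + 1) α.length → A.inC j (suff α k) ≤ A.fk α k) ∧
  (∀ k, 0 < k → k < r + 1 → ∀ h, 1 ≤ h → h ≤ j → ∀ u : Q, rankQ u = h →
      ∀ ρ : List σ, ρ.length = k → ρ ∈ A.lab u → ColexLt ρ α)

/-- The property defining `i*` (largest `i ≤ |Q|` satisfying it):
if `i ≥ 1` then `Q[i] ∈ G*(α)`. -/
def Icond (A : GNFA σ Q) (α : List σ) (i : ℕ) : Prop :=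
  1 ≤ i → ∃ u : Q, rankQ u = i ∧ u ∈ A.Gstar α

/-- The property defining `j°` (smallest `j ≤ |Q|` satisfying it):
`in(Q[1, j], s(α, k)) ≥ g_k` for every `0 < k < min{r+1, |α|}` with `g_k > f_k`. -/
def Jcond2 (A : GNFA σ Q) (r : ℕ) (α : List σ) (j : ℕ) : Prop :=
  ∀ k, 0 < k → k < min (r + 1) α.length → A.fk α k < A.gk α k →
    A.gk α k ≤ A.inC j (suff α k)

end Indexed

end GNFA

/-!
By Axiom 1, whenever `u ≤ v`, every string of `I_u` outside `I_v` is colex-smaller than every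
string of `I_v` outside `I_u`. If `v ∈ G^≺(α)`, this puts every string of `I_u` below some string
of `I_v`, hence below `α`. If `v ∈ G_⊣(α)` through some `δ ∈ I_v \ I_u`, then any `β ∈ I_u` with
`α ≼ β` satisfies `α ≼ β ≺ δ`; the strings colex-between `α` and an extension `δ` of `α` on the
left are themselves such extensions, so `α` is a suffix of `β`. Thus `G^≺_⊣(α)` is a lower set of
the Wheeler order, i.e. an initial segment `Q[1, m]`.
-/

section Colex

variable {σ : Type*} [LinearOrder σ]

theorem List.IsPrefix.of_not_lt_of_not_lt {a g d : List σ} (h : a <+: d) (hag : ¬ g < a)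
    (hgd : ¬ d < g) : a <+: g := by
  induction a generalizing g d with
  | nil => exact List.nil_prefix
  | cons x a ih =>
    obtain ⟨t, rfl⟩ := h
    cases g with
    | nil => exact absurd (List.nil_lt_cons x a) hag
    | cons y g =>
      simp only [List.cons_append, List.cons_lt_cons_iff, not_or, not_and] at hag hgd
      obtain rfl : x = y := le_antisymm (not_lt.mp hag.1) (not_lt.mp hgd.1)
      exact List.cons_prefix_cons.mpr ⟨rfl, ih (List.prefix_append a t) (hag.2 rfl) (hgd.2 rfl)⟩

theorem ColexLt.trans {α β γ : List σ} (h₁ : ColexLt α β) (h₂ : ColexLt β γ) : ColexLt α γ :=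
  List.lt_trans (l₁ := α.reverse) h₁ h₂

theorem List.IsSuffix.of_not_colexLt_of_colexLt {α β δ : List σ} (h : α <:+ δ)
    (hαβ : ¬ ColexLt β α) (hβδ : ColexLt β δ) : α <:+ β :=
  List.reverse_prefix.mp <|
    (List.reverse_prefix.mpr h).of_not_lt_of_not_lt hαβ (List.lt_asymm (l₁ := β.reverse) hβδ)

end Colex

namespace GNFA

variable {σ Q : Type*}

theorem exists_I_of_reach (A : GNFA σ Q) {u : Q} (hu : A.Reach A.s u) : ∃ β, A.I u β := by
  induction hu with
  | refl => exact ⟨[], I.base⟩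
  | tail _ hedge ih =>
    obtain ⟨β, hβ⟩ := ih
    obtain ⟨ρ, hρ⟩ := hedge
    exact ⟨β ++ ρ, hβ.step hρ⟩

variable [LinearOrder σ]

theorem Preceq.colexLt_of_not_I_left {A : GNFA σ Q} {u v : Q} (h : A.Preceq u v)
    {β γ : List σ} (hβ : A.I u β) (hγ : A.I v γ) (hγu : ¬ A.I u γ) : ColexLt β γ :=
  h β γ hβ hγ fun hboth => hγu hboth.2.1

theorem Preceq.colexLt_of_not_I_right {A : GNFA σ Q} {u v : Q} (h : A.Preceq u v)
    {β γ : List σ} (hβ : A.I u β) (hγ : A.I v γ) (hβv : ¬ A.I v β) : ColexLt β γ :=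
  h β γ hβ hγ fun hboth => hβv hboth.1.2

theorem Preceq.mem_Gprec {A : GNFA σ Q} {u v : Q} (h : A.Preceq u v) (hv : ∃ γ, A.I v γ)
    {α : List σ} (hvα : v ∈ A.Gprec α) : u ∈ A.Gprec α := by
  intro β hβ
  by_cases hβv : A.I v β
  · exact hvα β hβv
  · obtain ⟨γ, hγ⟩ := hv
    exact (h.colexLt_of_not_I_right hβ hγ hβv).trans (hvα γ hγ)

theorem Preceq.mem_GprecSuf_of_mem_Gsuf {A : GNFA σ Q} {u v : Q} (h : A.Preceq u v)
    {α : List σ} (hvα : v ∈ A.Gsuf α) : u ∈ A.GprecSuf α := by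
  obtain ⟨δ, hδ, hαδ⟩ := hvα
  by_cases hδu : A.I u δ
  · exact Or.inr ⟨δ, hδu, hαδ⟩
  by_cases hu : u ∈ A.Gprec α
  · exact Or.inl hu
  obtain ⟨β, hβ, hβα⟩ : ∃ β, A.I u β ∧ ¬ ColexLt β α := by
    simpa only [Gprec, Set.mem_ofPred_eq, not_forall, exists_prop] using hu
  exact Or.inr ⟨β, hβ, hαδ.of_not_colexLt_of_colexLt hβα (h.colexLt_of_not_I_left hβ hδ hδu)⟩

theorem isLowerSet_GprecSuf [LinearOrder Q] (A : GNFA σ Q) (hreach : ∀ u, A.Reach A.s u)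
    (hpre : ∀ u v : Q, u ≤ v → A.Preceq u v) (α : List σ) : IsLowerSet (A.GprecSuf α) := by
  rintro v u huv (hv | hv)
  · exact Or.inl ((hpre u v huv).mem_Gprec (A.exists_I_of_reach (hreach v)) hv)
  · exact (hpre u v huv).mem_GprecSuf_of_mem_Gsuf hv

end GNFA

section Rank

variable {Q : Type*} [Fintype Q] [LinearOrder Q]

theorem one_le_rankQ (u : Q) : 1 ≤ rankQ u :=
  (Set.ncard_pos (Set.toFinite _)).mpr ⟨u, le_refl u⟩

theorem IsLowerSet.eq_Qiv_one_ncard {S : Set Q} (hS : IsLowerSet S) : S = Qiv Q 1 S.ncard := by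
  ext u
  simp only [Qiv, Set.mem_ofPred_eq, one_le_rankQ u, true_and]
  constructor
  · intro hu
    exact Set.ncard_le_ncard (fun v hvu => hS hvu hu) (Set.toFinite S)
  · intro hrank
    by_contra hu
    have hS_lt : S ⊆ Set.Iio u := fun w hw => lt_of_not_ge fun huw => hu (hS huw hw)
    have : S.ncard < rankQ u :=
      (Set.ncard_le_ncard hS_lt (Set.toFinite _)).trans_lt
        (Set.ncard_lt_ncard Set.Iio_ssubset_Iic_self (Set.toFinite _))
    omega

end Rank

theorem gprecsuf_downward_closed_general {σ Q : Type*} [LinearOrder σ]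
    [Fintype Q] [LinearOrder Q] (A : GNFA σ Q)
    (hA : A.Standard) (hW : A.IsWheeler) (α : List σ) :
    (∀ u v : Q, u < v → v ∈ A.GprecSuf α → u ∈ A.GprecSuf α) ∧
    A.GprecSuf α = Qiv Q 1 (A.GprecSuf α).ncard := by
  have hlower := A.isLowerSet_GprecSuf hA.1 hW.1 α
  exact ⟨fun u v huv hv => hlower huv.le hv, hlower.eq_Qiv_one_ncard⟩

/-- Let `A` be a Wheeler GNFA with Wheeler order `≤` and
`α ∈ Σ*`. If `u < v` and `v ∈ G^≺_⊣(α)`, then `u ∈ G^≺_⊣(α)`; in other words,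
`G^≺_⊣(α) = Q[1, |G^≺_⊣(α)|]`. -/
theorem gprecsuf_downward_closed {σ Q : Type*} [Fintype σ] [LinearOrder σ]
    [Fintype Q] [LinearOrder Q] (A : GNFA σ Q)
    (hA : A.Standard) (hW : A.IsWheeler) (α : List σ) :
    (∀ u v : Q, u < v → v ∈ A.GprecSuf α → u ∈ A.GprecSuf α) ∧
    A.GprecSuf α = Qiv Q 1 (A.GprecSuf α).ncard :=
  gprecsuf_downward_closed_general A hA hW α
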